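/- arXiv:1712.05218 — 2 statements merged into one kernel-verified Lean document; each statement's English description precedes it below -/
import Mathlib

section
/- Let p_1,…,p_n be positive integers. Construct the weighted graph G with vertex set {s, w¹, w, w²} ∪ {v_1¹,…,v_n¹} ∪ {v_1²,…,v_n²}, edges {s,v_j^i} and {w^i,v_j^i} for all j ∈ {1,…,n} and i ∈ {1,2}, and edges {w¹,w}, {w²,w}, all of weight 1; set turnover times τ(w¹) = τ(w) = τ(w²) = 1 and τ(v_j¹) = τ(v_j²) = p_j. Then the RFTT instance (G,τ) with depot s admits a feasible periodic schedule of average tour cost at most 6 (in the shortest-path metric of G) if and only if there exists a pinwheel schedule for p_1,…,p_n. -/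
open scoped BigOperators

/-- Vertices of the reduction graph: `Sum.inl 0 = s`, `Sum.inl 1 = w¹`,
`Sum.inl 2 = w`, `Sum.inl 3 = w²`, and `Sum.inr (j, 0) = v_j¹`,
`Sum.inr (j, 1) = v_j²`. -/
abbrev RedVtx (n : ℕ) := (Fin 4) ⊕ (Fin n × Fin 2)

/-- The edges of the reduction graph: `{s, v_j^i}` and `{w^i, v_j^i}` for all `j, i`,
together with `{w¹, w}` and `{w², w}`. -/
def redRel (n : ℕ) (x y : RedVtx n) : Prop :=
  (x = Sum.inl 0 ∧ ∃ j i, y = Sum.inr (j, i)) ∨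
  (∃ j, x = Sum.inl 1 ∧ y = Sum.inr (j, 0)) ∨
  (∃ j, x = Sum.inl 3 ∧ y = Sum.inr (j, 1)) ∨
  (x = Sum.inl 2 ∧ (y = Sum.inl 1 ∨ y = Sum.inl 3))

/-- The reduction graph (all edge weights are 1, so its shortest-path metric is the
graph distance). -/
def redGraph (n : ℕ) : SimpleGraph (RedVtx n) := SimpleGraph.fromRel (redRel n)

/-- Turnover times: `τ(w¹) = τ(w) = τ(w²) = 1` and `τ(v_j¹) = τ(v_j²) = p j`. -/
def redTau {n : ℕ} (p : Fin n → ℕ) : RedVtx n → ℕ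
  | Sum.inl _ => 1
  | Sum.inr (j, _) => p j

/-- The cost of the route `s, v₁, …, v_r, s` where `l = [v₁, …, v_r]`. -/
def routeLen {X : Type*} (d : X → X → ℝ) (s : X) (l : List X) : ℝ :=
  (List.zip (s :: l) (l ++ [s])).foldr (fun p acc => d p.1 p.2 + acc) 0

/-- The tour cost of a finite set `S`: the minimum over all orderings `v₁,…,v_r` of the
elements of `S` of `d s v₁ + ∑ d vᵢ vᵢ₊₁ + d v_r s`, with `c ∅ = 0`. -/
noncomputable def tourCost {X : Type*} [DecidableEq X] (d : X → X → ℝ) (s : X)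
    (S : Finset X) : ℝ :=
  if S = ∅ then 0
  else sInf {x : ℝ | ∃ l : List X, l.Nodup ∧ l.toFinset = S ∧ x = routeLen d s l}

/-!
Since `τ(w) = τ(w²) = 1`, every day's tour visits `w` and `w²`, and `d(s, w) = 3`, so every day
costs at least 6 and an average of at most 6 forces every day to cost at most 6. A tour through
`w`, `w²` and two distinct `v_j¹, v_{j'}¹` costs at least 8, so the days on which `v_j¹` is visited
form a pinwheel schedule. Conversely, a pinwheel schedule contains a window of days that can be
repeated periodically (pigeonhole on blocks of length `max p_j`), and visiting the job `j` of the
day along `s, v_j¹, w¹, w, w², v_j², s` costs 6.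
-/

section Route

variable {X : Type*} {d : X → X → ℝ}

variable (d) in
def pathLen (a : X) (l : List X) (b : X) : ℝ :=
  (List.zip (a :: l) (l ++ [b])).foldr (fun p acc => d p.1 p.2 + acc) 0

@[simp]
lemma pathLen_nil (a b : X) : pathLen d a [] b = d a b := by
  simp [pathLen]

@[simp]
lemma pathLen_cons (a x : X) (l : List X) (b : X) :
    pathLen d a (x :: l) b = d a x + pathLen d x l b := by
  simp [pathLen]

lemma routeLen_eq_pathLen (s : X) (l : List X) : routeLen d s l = pathLen d s l s := rfl

lemma pathLen_nonneg (hd : ∀ a b, 0 ≤ d a b) (a : X) (l : List X) (b : X) :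
    0 ≤ pathLen d a l b := by
  induction l generalizing a with
  | nil => simpa using hd a b
  | cons x l ih => simpa using add_nonneg (hd a x) (ih x)

lemma pathLen_le_add (htri : ∀ a b c, d a c ≤ d a b + d b c) (a x : X) (l : List X) (b : X) :
    pathLen d a l b ≤ d a x + pathLen d x l b := by
  cases l with
  | nil => simpa using htri a x b
  | cons y l => simpa [← add_assoc] using htri a x y

lemma List.Sublist.pathLen_le (htri : ∀ a b c, d a c ≤ d a b + d b c) {l₁ l₂ : List X}
    (h : l₁.Sublist l₂) (a b : X) : pathLen d a l₁ b ≤ pathLen d a l₂ b := by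
  induction h generalizing a with
  | slnil => rfl
  | cons x _ ih =>
    simpa using (pathLen_le_add htri a x _ b).trans (add_le_add_right (ih x) _)
  | cons_cons x _ ih => simpa using ih x

end Route

section TourCost

variable {X : Type*} [DecidableEq X] {d : X → X → ℝ} {s : X}

lemma tourCost_le_routeLen (hd : ∀ a b, 0 ≤ d a b) {l : List X} (hl : l.Nodup) :
    tourCost d s l.toFinset ≤ routeLen d s l := by
  rw [tourCost]
  split_ifs with hl0
  · exact pathLen_nonneg hd s l s
  · refine csInf_le ⟨0, ?_⟩ ⟨l, hl, rfl, rfl⟩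
    rintro x ⟨m, -, -, rfl⟩
    exact pathLen_nonneg hd s m s

lemma le_tourCost {S : Finset X} (hS : S.Nonempty) {c : ℝ}
    (h : ∀ l : List X, l.Nodup → l.toFinset = S → c ≤ routeLen d s l) :
    c ≤ tourCost d s S := by
  rw [tourCost, if_neg hS.ne_empty]
  refine le_csInf ⟨_, S.toList, S.nodup_toList, S.toList_toFinset, rfl⟩ ?_
  rintro x ⟨l, hl, hlS, rfl⟩
  exact h l hl hlS

lemma tourCost_mono (hd : ∀ a b, 0 ≤ d a b) (htri : ∀ a b c, d a c ≤ d a b + d b c)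
    {S T : Finset X} (hST : S ⊆ T) : tourCost d s S ≤ tourCost d s T := by
  rcases T.eq_empty_or_nonempty with rfl | hT
  · rw [Finset.subset_empty.1 hST]
  refine le_tourCost hT fun l hl hlT => ?_
  have hsub : (l.filter (· ∈ S)).Sublist l := List.filter_sublist
  have hS : (l.filter (· ∈ S)).toFinset = S := by
    ext x
    simpa [← hlT] using fun hx => hST hx
  calc tourCost d s S = tourCost d s (l.filter (· ∈ S)).toFinset := by rw [hS]
    _ ≤ routeLen d s (l.filter (· ∈ S)) := tourCost_le_routeLen hd (hsub.nodup hl)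
    _ ≤ routeLen d s l := hsub.pathLen_le htri s s

lemma tourCost_singleton (hd : ∀ a b, 0 ≤ d a b) (x : X) :
    tourCost d s {x} = d s x + d x s := by
  refine le_antisymm ?_ (le_tourCost (Finset.singleton_nonempty x) fun l hl hlx => ?_)
  · simpa [routeLen_eq_pathLen] using
      tourCost_le_routeLen (s := s) hd (List.nodup_singleton x)
  · obtain rfl : l = [x] := List.perm_singleton.1 <|
      (List.perm_ext_iff_of_nodup hl (List.nodup_singleton x)).2 fun y => by
        simpa using congrArg (y ∈ ·) hlx
    simp [routeLen_eq_pathLen]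

end TourCost

section Pinwheel

variable {ι : Type*}

def VisitsWithin (p : ι → ℕ) (σ : ℕ → Finset ι) : Prop :=
  ∀ j t, ∃ k, t < k ∧ k ≤ t + p j ∧ j ∈ σ k

lemma exists_repeated_window {α : Type*} [Finite α] (f : ℕ → α) (P : ℕ) :
    ∃ t ℓ, P < ℓ ∧ ∀ i < P, f (t + ℓ + i) = f (t + i) := by
  obtain ⟨a, b, hab, heq⟩ := Finite.exists_ne_map_eq_of_infinite
    fun a (i : Fin P) => f (a * (P + 1) + i)
  wlog hlt : a < b generalizing a b
  · exact this b a hab.symm heq.symm (by omega)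
  refine ⟨a * (P + 1), (b - a) * (P + 1), ?_, fun i hi => ?_⟩
  · nlinarith [Nat.sub_pos_of_lt hlt]
  · have hb : a * (P + 1) + (b - a) * (P + 1) = b * (P + 1) := by
      rw [← add_mul, Nat.add_sub_cancel' hlt.le]
    rw [hb]
    exact (congrFun heq ⟨i, hi⟩).symm

-- A visit due after the end of the repeated window is found at its start, since the `P` days
-- after the window repeat its first `P` days.
lemma VisitsWithin.periodic_of_window {p : ι → ℕ} {σ : ℕ → Finset ι} (h : VisitsWithin p σ)
    {t ℓ P : ℕ} (hpP : ∀ j, p j ≤ P) (hPℓ : P ≤ ℓ)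
    (hwin : ∀ i < P, σ (t + ℓ + i + 1) = σ (t + i + 1)) :
    VisitsWithin p (fun k => σ (t + k % ℓ + 1)) := by
  intro j T
  obtain ⟨k, hk, hkp, hjk⟩ := h j (t + (T + 1) % ℓ)
  have hℓ : 0 < ℓ := by have := hpP j; omega
  have ha := Nat.mod_lt (T + 1) hℓ
  obtain ⟨m, rfl⟩ : ∃ m, k = t + (T + 1) % ℓ + 1 + m := ⟨k - (t + (T + 1) % ℓ + 1), by omega⟩
  refine ⟨T + 1 + m, by omega, by omega, ?_⟩
  have hmp : m < p j := by omega
  show j ∈ σ (t + (T + 1 + m) % ℓ + 1)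
  rw [← Nat.mod_add_mod]
  set a := (T + 1) % ℓ
  by_cases hwrap : a + m < ℓ
  · rwa [Nat.mod_eq_of_lt hwrap, ← add_assoc, add_right_comm]
  · have hP := hpP j
    rw [Nat.mod_eq_sub_mod (by omega), Nat.mod_eq_of_lt (by omega), ← hwin _ (by omega)]
    convert hjk using 2
    omega

lemma VisitsWithin.exists_periodic [Finite ι] {p : ι → ℕ} {σ : ℕ → Finset ι}
    (h : VisitsWithin p σ) : ∃ t ℓ, 0 < ℓ ∧ VisitsWithin p (fun k => σ (t + k % ℓ + 1)) := by
  have : Fintype ι := Fintype.ofFinite ι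
  obtain ⟨t, ℓ, hℓ, hwin⟩ := exists_repeated_window (fun k => σ (k + 1)) (Finset.univ.sup p)
  exact ⟨t, ℓ, by omega, h.periodic_of_window (fun j => Finset.le_sup (Finset.mem_univ j))
    hℓ.le hwin⟩

end Pinwheel

lemma Function.Periodic.exists_mem_Icc_eq {α : Type*} {f : ℕ → α} {ℓ : ℕ}
    (hf : Function.Periodic f ℓ) (hℓ : 0 < ℓ) (k : ℕ) : ∃ i ∈ Finset.Icc 1 ℓ, f i = f k := by
  have hg : Function.Periodic (fun m => f (m + 1)) ℓ := fun m => by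
    simpa only [add_right_comm] using hf (m + 1)
  refine ⟨(k + ℓ - 1) % ℓ + 1, Finset.mem_Icc.2 ⟨by omega, Nat.mod_lt _ hℓ⟩, ?_⟩
  rw [hg.map_mod_nat, Nat.sub_add_cancel (by omega), hf]

lemma Function.Periodic.le_of_sum_Icc_div_le {f : ℕ → ℝ} {ℓ : ℕ} {a : ℝ}
    (hf : Function.Periodic f ℓ) (hℓ : 0 < ℓ) (hlow : ∀ k ∈ Finset.Icc 1 ℓ, a ≤ f k)
    (havg : (∑ k ∈ Finset.Icc 1 ℓ, f k) / ℓ ≤ a) (k : ℕ) : f k ≤ a := by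
  obtain ⟨i, hi, hik⟩ := hf.exists_mem_Icc_eq hℓ k
  rw [← hik]
  by_contra! hlt
  have : ∑ _k ∈ Finset.Icc 1 ℓ, a < ∑ k ∈ Finset.Icc 1 ℓ, f k :=
    Finset.sum_lt_sum hlow ⟨i, hi, hlt⟩
  rw [div_le_iff₀ (by exact_mod_cast hℓ)] at havg
  rw [Finset.sum_const, Nat.card_Icc, add_tsub_cancel_right, nsmul_eq_mul] at this
  linarith

lemma sum_Icc_div_le {f : ℕ → ℝ} {ℓ : ℕ} {a : ℝ} (hℓ : 0 < ℓ) (h : ∀ k, f k ≤ a) :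
    (∑ k ∈ Finset.Icc 1 ℓ, f k) / ℓ ≤ a := by
  rw [div_le_iff₀ (by exact_mod_cast hℓ)]
  simpa [mul_comm] using Finset.sum_le_sum fun k (_ : k ∈ Finset.Icc 1 ℓ) => h k

open SimpleGraph

lemma SimpleGraph.Reachable.abs_sub_le_dist {V : Type*} {G : SimpleGraph V} {u v : V}
    (h : G.Reachable u v) (f : V → ℤ) (hf : ∀ x y, G.Adj x y → |f x - f y| ≤ 1) :
    |f u - f v| ≤ G.dist u v := by
  suffices key : ∀ {x y : V} (w : G.Walk x y), |f x - f y| ≤ w.length by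
    obtain ⟨w, hw⟩ := h.exists_walk_length_eq_dist
    exact hw ▸ key w
  intro x y w
  induction w with
  | nil => simp
  | @cons x z y hxz _ ih =>
    rw [Walk.length_cons, Nat.cast_succ]
    exact (abs_sub_le (f x) (f z) (f y)).trans (by linarith [hf _ _ hxz])

lemma SimpleGraph.Connected.two_le_dist {V : Type*} {G : SimpleGraph V} {u v : V}
    (h : G.Connected) (hne : u ≠ v) (hadj : ¬ G.Adj u v) : 2 ≤ G.dist u v := by
  have h0 := h.pos_dist_of_ne hne
  have h1 : G.dist u v ≠ 1 := fun h1 => hadj (dist_eq_one_iff_adj.1 h1)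
  omega

lemma SimpleGraph.dist_le_two {V : Type*} {G : SimpleGraph V} {u v w : V}
    (huv : G.Adj u v) (hvw : G.Adj v w) : G.dist u w ≤ 2 :=
  (dist_le (Walk.cons huv hvw.toWalk)).trans_eq rfl

section RedGraph

variable {n : ℕ}

noncomputable def redDist (n : ℕ) (u v : RedVtx n) : ℝ := (redGraph n).dist u v

lemma redDist_nonneg (u v : RedVtx n) : 0 ≤ redDist n u v := Nat.cast_nonneg _

lemma redDist_comm (u v : RedVtx n) : redDist n u v = redDist n v u := by
  rw [redDist, dist_comm, redDist]

lemma redGraph_connected (hn : 0 < n) : (redGraph n).Connected := by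
  have hv : ∀ j i, (redGraph n).Reachable (Sum.inl 0) (Sum.inr (j, i)) := fun j i =>
    Adj.reachable (by simp [redGraph, redRel])
  have hw₁ : (redGraph n).Reachable (Sum.inl 0) (Sum.inl 1) :=
    (hv ⟨0, hn⟩ 0).trans (Adj.reachable (by simp [redGraph, redRel]))
  have hw₂ : (redGraph n).Reachable (Sum.inl 0) (Sum.inl 3) :=
    (hv ⟨0, hn⟩ 1).trans (Adj.reachable (by simp [redGraph, redRel]))
  refine (connected_iff_exists_forall_reachable _).2 ⟨Sum.inl 0, ?_⟩
  rintro (a | ⟨j, i⟩)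
  · fin_cases a
    · rfl
    · exact hw₁
    · exact hw₁.trans (Adj.reachable (by simp [redGraph, redRel]))
    · exact hw₂
  · exact hv j i

lemma redDist_triangle (hn : 0 < n) (a b c : RedVtx n) :
    redDist n a c ≤ redDist n a b + redDist n b c := by
  unfold redDist
  exact_mod_cast (redGraph_connected hn).dist_triangle

lemma le_redGraph_dist (hn : 0 < n) (f : RedVtx n → ℤ)
    (hf : ∀ x y, redRel n x y → |f x - f y| ≤ 1) {u v : RedVtx n} {k : ℕ}
    (hk : (k : ℤ) ≤ |f u - f v|) : k ≤ (redGraph n).dist u v := by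
  refine Int.ofNat_le.1 (hk.trans
    (((redGraph_connected hn).preconnected u v).abs_sub_le_dist f fun x y hxy => ?_))
  rcases (SimpleGraph.fromRel_adj _ _ _).1 hxy with ⟨-, h | h⟩
  · exact hf x y h
  · exact abs_sub_comm (f x) (f y) ▸ hf y x h

-- The distance from `s` and the distance from the set of the `v_j¹`.
def depotLevel : RedVtx n → ℤ
  | Sum.inl 0 => 0
  | Sum.inl 1 => 2
  | Sum.inl 2 => 3
  | Sum.inl 3 => 2
  | Sum.inr _ => 1

def firstCopyLevel : RedVtx n → ℤ
  | Sum.inl 0 => 1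
  | Sum.inl 1 => 1
  | Sum.inl 2 => 2
  | Sum.inl 3 => 3
  | Sum.inr (_, i) => 2 * i

lemma depotLevel_lipschitz (x y : RedVtx n) (h : redRel n x y) :
    |depotLevel x - depotLevel y| ≤ 1 := by
  rcases h with ⟨rfl, j, i, rfl⟩ | ⟨j, rfl, rfl⟩ | ⟨j, rfl, rfl⟩ | ⟨rfl, rfl | rfl⟩ <;>
    simp [depotLevel]

lemma firstCopyLevel_lipschitz (x y : RedVtx n) (h : redRel n x y) :
    |firstCopyLevel x - firstCopyLevel y| ≤ 1 := by
  rcases h with ⟨rfl, j, i, rfl⟩ | ⟨j, rfl, rfl⟩ | ⟨j, rfl, rfl⟩ | ⟨rfl, rfl | rfl⟩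
  · fin_cases i <;> simp [firstCopyLevel]
  all_goals simp [firstCopyLevel]

-- `SimpleGraph.dist` is `0` between unreachable vertices, and for `n = 0` the depot is isolated.
lemma redGraph_zero_dist_inl_zero (x : RedVtx 0) : (redGraph 0).dist (Sum.inl 0) x = 0 := by
  by_cases hx : x = Sum.inl 0
  · simp [hx]
  refine dist_eq_zero_of_not_reachable fun ⟨w⟩ => ?_
  cases w with
  | nil => exact hx rfl
  | cons h _ => simp [redGraph, redRel] at h

lemma redGraph_dist_inl_zero_inl_one_le : (redGraph n).dist (Sum.inl 0) (Sum.inl 1) ≤ 2 := by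
  cases n with
  | zero => simp [redGraph_zero_dist_inl_zero]
  | succ n =>
    have h₁ : (redGraph (n + 1)).Adj (Sum.inl 0) (Sum.inr (0, 0)) := by simp [redGraph, redRel]
    have h₂ : (redGraph (n + 1)).Adj (Sum.inr (0, 0)) (Sum.inl 1) := by simp [redGraph, redRel]
    exact dist_le_two h₁ h₂

lemma redGraph_dist_inl_three_inl_zero_le : (redGraph n).dist (Sum.inl 3) (Sum.inl 0) ≤ 2 := by
  cases n with
  | zero => simp [dist_comm, redGraph_zero_dist_inl_zero]
  | succ n =>
    have h₁ : (redGraph (n + 1)).Adj (Sum.inl 3) (Sum.inr (0, 1)) := by simp [redGraph, redRel]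
    have h₂ : (redGraph (n + 1)).Adj (Sum.inr (0, 1)) (Sum.inl 0) := by simp [redGraph, redRel]
    exact dist_le_two h₁ h₂

section Connected

variable (hn : 0 < n)
include hn

lemma three_le_redGraph_dist_inl_zero_inl_two :
    3 ≤ (redGraph n).dist (Sum.inl 0) (Sum.inl 2) :=
  le_redGraph_dist hn depotLevel depotLevel_lipschitz (by norm_num [depotLevel])

lemma six_le_tourCost {S : Finset (RedVtx n)} (hw : Sum.inl 2 ∈ S) :
    6 ≤ tourCost (redDist n) (Sum.inl 0) S := by
  have hsw : (3 : ℝ) ≤ redDist n (Sum.inl 0) (Sum.inl 2) := by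
    rw [redDist]
    exact_mod_cast three_le_redGraph_dist_inl_zero_inl_two hn
  calc (6 : ℝ) ≤ tourCost (redDist n) (Sum.inl 0) {Sum.inl 2} := by
        rw [tourCost_singleton redDist_nonneg, redDist_comm (Sum.inl 2)]
        linarith
    _ ≤ tourCost (redDist n) (Sum.inl 0) S :=
        tourCost_mono redDist_nonneg (redDist_triangle hn) (Finset.singleton_subset_iff.2 hw)

lemma eight_le_tourCost {j j' : Fin n} (hjj : j ≠ j') {S : Finset (RedVtx n)}
    (hS : {Sum.inr (j, 0), Sum.inr (j', 0), Sum.inl 2, Sum.inl 3} ⊆ S) :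
    8 ≤ tourCost (redDist n) (Sum.inl 0) S := by
  set s : RedVtx n := Sum.inl 0
  set A : RedVtx n := Sum.inr (j, 0)
  set B : RedVtx n := Sum.inr (j', 0)
  set C : RedVtx n := Sum.inl 2
  set D : RedVtx n := Sum.inl 3
  have hconn := redGraph_connected hn
  have hlev := @le_redGraph_dist n hn depotLevel depotLevel_lipschitz
  have hcopy := @le_redGraph_dist n hn firstCopyLevel firstCopyLevel_lipschitz
  have hsA : 1 ≤ (redGraph n).dist s A := hconn.pos_dist_of_ne (by simp [s, A])
  have hsB : 1 ≤ (redGraph n).dist s B := hconn.pos_dist_of_ne (by simp [s, B])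
  have hsC : 3 ≤ (redGraph n).dist s C := three_le_redGraph_dist_inl_zero_inl_two hn
  have hsD : 2 ≤ (redGraph n).dist s D := hlev (by norm_num [depotLevel, s, D])
  have hAB : 2 ≤ (redGraph n).dist A B :=
    hconn.two_le_dist (by simp [A, B, hjj]) (by simp [A, B, redGraph, redRel])
  have hAC : 2 ≤ (redGraph n).dist A C := hlev (by norm_num [depotLevel, A, C])
  have hBC : 2 ≤ (redGraph n).dist B C := hlev (by norm_num [depotLevel, B, C])
  have hAD : 3 ≤ (redGraph n).dist A D := hcopy (by norm_num [firstCopyLevel, A, D])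
  have hBD : 3 ≤ (redGraph n).dist B D := hcopy (by norm_num [firstCopyLevel, B, D])
  have hCD : 1 ≤ (redGraph n).dist C D := hconn.pos_dist_of_ne (by simp [C, D])
  have hroutes : ∀ l ∈ [A, B, C, D].permutations, 8 ≤ routeLen (redDist n) s l := by
    simp only [List.permutations, List.permutationsAux, List.permutationsAux.rec,
      List.foldr_cons, List.foldr_nil, List.permutationsAux2_snd_nil,
      List.permutationsAux2_snd_cons, List.append_nil, id_eq, List.cons_append, List.nil_append,
      List.mem_cons, List.not_mem_nil, or_false, forall_eq_or_imp, forall_eq,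
      routeLen_eq_pathLen, pathLen_cons, pathLen_nil, redDist, dist_comm]
    simp only [dist_comm] at hsA hsB hsC hsD hAB hAC hBC hAD hBD hCD
    norm_cast
    and_intros <;> omega
  refine (le_tourCost (by simp) fun l hl hlS => hroutes l ?_).trans
    (tourCost_mono redDist_nonneg (redDist_triangle hn) hS)
  refine List.mem_permutations.2 ((List.perm_ext_iff_of_nodup hl ?_).2 fun x => ?_)
  · simp [A, B, C, D, hjj]
  · simpa using congrArg (x ∈ ·) hlS

end Connected

-- `w¹, w, w²` every day, and both copies `v_j¹, v_j²` of every job `j` that `σ` schedules.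
def redSchedule (σ : ℕ → Finset (Fin n)) (k : ℕ) : Finset (RedVtx n) :=
  ({1, 2, 3} : Finset (Fin 4)).disjSum (σ k ×ˢ Finset.univ)

lemma redSchedule_feasible {p : Fin n → ℕ} {σ : ℕ → Finset (Fin n)} (h : VisitsWithin p σ)
    (v : RedVtx n) (hv : v ≠ Sum.inl 0) (t : ℕ) :
    ∃ k, t < k ∧ k ≤ t + redTau p v ∧ v ∈ redSchedule σ k := by
  rcases v with a | ⟨j, i⟩
  · refine ⟨t + 1, by omega, le_rfl, ?_⟩
    fin_cases a <;> simp_all [redSchedule]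
  · obtain ⟨k, hk⟩ := h j t
    exact ⟨k, by simpa [redTau, redSchedule] using hk⟩

lemma tourCost_redSchedule_le {σ : ℕ → Finset (Fin n)} {k : ℕ} (hσ : (σ k).card ≤ 1) :
    tourCost (redDist n) (Sum.inl 0) (redSchedule σ k) ≤ 6 := by
  have hadj : ∀ {x y : RedVtx n}, (redGraph n).Adj x y → redDist n x y ≤ 1 := fun h => by
    simp [redDist, dist_eq_one_iff_adj.2 h]
  rcases (σ k).eq_empty_or_nonempty with hk | ⟨j, hj⟩
  · have hS : [Sum.inl 1, Sum.inl 2, Sum.inl 3].toFinset = redSchedule σ k := by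
      ext (a | x) <;> [fin_cases a; skip] <;> simp [redSchedule, hk]
    have h₁ : redDist n (Sum.inl 0) (Sum.inl 1) ≤ 2 := by
      rw [redDist]; exact_mod_cast redGraph_dist_inl_zero_inl_one_le
    have h₂ : redDist n (Sum.inl 3) (Sum.inl 0) ≤ 2 := by
      rw [redDist]; exact_mod_cast redGraph_dist_inl_three_inl_zero_le
    rw [← hS]
    refine (tourCost_le_routeLen redDist_nonneg (by simp)).trans ?_
    simp only [routeLen_eq_pathLen, pathLen_cons, pathLen_nil]
    linarith [hadj (x := Sum.inl 1) (y := Sum.inl 2) (by simp [redGraph, redRel]),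
      hadj (x := Sum.inl 2) (y := Sum.inl 3) (by simp [redGraph, redRel])]
  · have hk : σ k = {j} := Finset.eq_singleton_iff_unique_mem.2
      ⟨hj, fun j' hj' => Finset.card_le_one.1 hσ j' hj' j hj⟩
    have hS : [Sum.inr (j, 0), Sum.inl 1, Sum.inl 2, Sum.inl 3, Sum.inr (j, 1)].toFinset =
        redSchedule σ k := by
      ext (a | ⟨x, i⟩) <;> [fin_cases a; fin_cases i] <;> simp [redSchedule, hk, eq_comm]
    rw [← hS]
    refine (tourCost_le_routeLen redDist_nonneg (by simp)).trans ?_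
    simp only [routeLen_eq_pathLen, pathLen_cons, pathLen_nil]
    linarith [hadj (x := Sum.inl 0) (y := Sum.inr (j, 0)) (by simp [redGraph, redRel]),
      hadj (x := Sum.inr (j, 0)) (y := Sum.inl 1) (by simp [redGraph, redRel]),
      hadj (x := Sum.inl 1) (y := Sum.inl 2) (by simp [redGraph, redRel]),
      hadj (x := Sum.inl 2) (y := Sum.inl 3) (by simp [redGraph, redRel]),
      hadj (x := Sum.inl 3) (y := Sum.inr (j, 1)) (by simp [redGraph, redRel]),
      hadj (x := Sum.inr (j, 1)) (y := Sum.inl 0) (by simp [redGraph, redRel])]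

lemma exists_pinwheel_of_schedule {p : Fin n → ℕ} {J : ℕ → Finset (RedVtx n)} {ℓ : ℕ}
    (hℓ : 0 < ℓ) (hper : Function.Periodic J ℓ)
    (hfeas : ∀ v : RedVtx n, v ≠ Sum.inl 0 → ∀ t, ∃ k, t < k ∧ k ≤ t + redTau p v ∧ v ∈ J k)
    (havg : (∑ k ∈ Finset.Icc 1 ℓ, tourCost (redDist n) (Sum.inl 0) (J k)) / ℓ ≤ 6) :
    ∃ σ : ℕ → Finset (Fin n), (∀ k, (σ k).card ≤ 1) ∧ VisitsWithin p σ := by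
  have hmem : ∀ a : Fin 4, a ≠ 0 → ∀ k, Sum.inl a ∈ J k := by
    intro a ha k
    obtain ⟨i, hi, hik⟩ := hper.exists_mem_Icc_eq hℓ k
    obtain ⟨k', hk', hk'i, hJ⟩ := hfeas (Sum.inl a) (by simpa using ha) (i - 1)
    have : k' = i := by simp only [redTau, Finset.mem_Icc] at hk'i hi; omega
    rwa [← hik, ← this]
  refine ⟨fun k => Finset.univ.filter fun j => Sum.inr (j, 0) ∈ J k, fun k => ?_, fun j t => ?_⟩
  · refine Finset.card_le_one.2 fun j hj j' hj' => ?_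
    by_contra hjj
    have hcheap : tourCost (redDist n) (Sum.inl 0) (J k) ≤ 6 :=
      (hper.comp (tourCost (redDist n) (Sum.inl 0))).le_of_sum_Icc_div_le hℓ
        (fun i _ => six_le_tourCost j.pos (hmem 2 (by decide) i)) havg k
    have hfour : {Sum.inr (j, 0), Sum.inr (j', 0), Sum.inl 2, Sum.inl 3} ⊆ J k := by
      simp only [Finset.insert_subset_iff, Finset.singleton_subset_iff]
      exact ⟨(Finset.mem_filter.1 hj).2, (Finset.mem_filter.1 hj').2, hmem 2 (by decide) k,
        hmem 3 (by decide) k⟩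
    linarith [eight_le_tourCost j.pos hjj hfour]
  · obtain ⟨k, hk⟩ := hfeas (Sum.inr (j, 0)) (by simp) t
    exact ⟨k, by simpa [redTau] using hk⟩

end RedGraph

theorem redGraph_minAvg_iff_pinwheel_general (n : ℕ) (p : Fin n → ℕ) :
    (∃ (J : ℕ → Finset (RedVtx n)) (ℓ : ℕ), 1 ≤ ℓ ∧ (∀ k : ℕ, J (k + ℓ) = J k) ∧
      (∀ v : RedVtx n, v ≠ Sum.inl 0 → ∀ t : ℕ,
        ∃ k : ℕ, t < k ∧ k ≤ t + redTau p v ∧ v ∈ J k) ∧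
      (∑ k ∈ Finset.Icc 1 ℓ,
        tourCost (fun u v => ((redGraph n).dist u v : ℝ)) (Sum.inl 0) (J k)) / (ℓ : ℝ)
        ≤ 6) ↔
    (∃ σ : ℕ → Finset (Fin n), (∀ k : ℕ, (σ k).card ≤ 1) ∧
      ∀ j : Fin n, ∀ t : ℕ, ∃ k : ℕ, t < k ∧ k ≤ t + p j ∧ j ∈ σ k) := by
  constructor
  · rintro ⟨J, ℓ, hℓ, hper, hfeas, havg⟩
    exact exists_pinwheel_of_schedule hℓ hper hfeas havg
  · rintro ⟨σ, hcard, hσ⟩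
    obtain ⟨t, ℓ, hℓ, hperiodic⟩ := VisitsWithin.exists_periodic hσ
    refine ⟨redSchedule fun k => σ (t + k % ℓ + 1), ℓ, hℓ, fun k => ?_,
      redSchedule_feasible hperiodic,
      sum_Icc_div_le hℓ fun k => tourCost_redSchedule_le (hcard _)⟩
    simp only [redSchedule, Nat.add_mod_right]

/-- The RFTT instance on the reduction graph (with depot `s` and shortest-path metric)
admits a feasible periodic schedule of average tour cost at most 6 if and only if
there is a pinwheel schedule for the periods `p_1, …, p_n`. -/
theorem redGraph_minAvg_iff_pinwheel (n : ℕ) (p : Fin n → ℕ)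
    (hp : ∀ j : Fin n, 1 ≤ p j) :
    (∃ (J : ℕ → Finset (RedVtx n)) (ℓ : ℕ), 1 ≤ ℓ ∧ (∀ k : ℕ, J (k + ℓ) = J k) ∧
      (∀ v : RedVtx n, v ≠ Sum.inl 0 → ∀ t : ℕ,
        ∃ k : ℕ, t < k ∧ k ≤ t + redTau p v ∧ v ∈ J k) ∧
      (∑ k ∈ Finset.Icc 1 ℓ,
        tourCost (fun u v => ((redGraph n).dist u v : ℝ)) (Sum.inl 0) (J k)) / (ℓ : ℝ)
        ≤ 6) ↔
    (∃ σ : ℕ → Finset (Fin n), (∀ k : ℕ, (σ k).card ≤ 1) ∧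
      ∀ j : Fin n, ∀ t : ℕ, ∃ k : ℕ, t < k ∧ k ≤ t + p j ∧ j ∈ σ k) :=
  redGraph_minAvg_iff_pinwheel_general n p
end

section
/- Let T be a finite tree on vertex set V with nonnegative edge weights, n = |V|, total edge weight c(T), and weighted tree metric d_T. Let τ : V → ℕ and let s ∈ V satisfy τ(s) < τ(v) for all v ≠ s. Then there exists a function parent : V ∖ {s} → V such that (i) for every v ≠ s, τ(parent(v)) ≤ τ(v); (ii) the arcs (parent(v), v) form a spanning arborescence rooted at s (i.e., iterating parent from any vertex reaches s); and (iii) Σ_{v ≠ s} d_T(v, parent(v)) ≤ ⌈log₂ n⌉ · c(T). -/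
/-!
Pair up all but at most one vertex of a vertex set `U` by a cheapest pairing. In a cheapest
pairing no edge of positive weight lies on the tree paths of two different pairs: uncrossing
the two pairs at such an edge would save twice its weight. Hence the pairing costs at most
`c(T)`. Let the endpoint of larger turnover time (ties broken by a fixed enumeration) of each
pair point to the other one and discard it: `s` survives, and at most `⌈|U| / 2⌉` vertices
remain. Recursing, `⌈log₂ n⌉` rounds of cost at most `c(T)` each reach `{s}`.
-/

open scoped BigOperators

/-- The unique path between `u` and `v` in a tree, as a walk. -/
noncomputable def treePath {α : Type*} {G : SimpleGraph α} (hG : G.IsTree) (u v : α) :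
    G.Walk u v :=
  (hG.existsUnique_path u v).exists.choose

/-- The weighted shortest-path (tree) metric: the total weight of the unique path. -/
noncomputable def treeDist {α : Type*} {G : SimpleGraph α} (hG : G.IsTree)
    (w : Sym2 α → ℝ) (u v : α) : ℝ :=
  ((treePath hG u v).edges.map w).sum

open Finset SimpleGraph

section Pairing

variable {V : Type*} [DecidableEq V]

/-- `f` pairs each `x ∈ U` with `f x`; the (at most one) unpaired element of `U` is a fixed
point. -/
structure IsPairing (U : Finset V) (f : V → V) : Prop where
  involutive : Function.Involutive f
  eq_self_of_notMem : ∀ x ∉ U, f x = x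
  card_fixed_le_one : #{x ∈ U | f x = x} ≤ 1

namespace IsPairing

variable {U : Finset V} {f : V → V}

theorem mem (hf : IsPairing U f) {x : V} (hx : x ∈ U) : f x ∈ U := by
  by_contra h
  have h' := hf.eq_self_of_notMem _ h
  rw [hf.involutive x] at h'
  exact h (h' ▸ hx)

theorem card_filter_not_lt_le {K : Type*} [LinearOrder K] {key : V → K}
    (hkey : Function.Injective key) (hf : IsPairing U f) :
    #{x ∈ U | ¬key (f x) < key x} ≤ #{x ∈ U | key (f x) < key x} + 1 := by
  set A := {x ∈ U | ¬key (f x) < key x}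
  have hmoved : #{x ∈ A | ¬f x = x} ≤ #{x ∈ U | key (f x) < key x} := by
    refine card_le_card_of_injOn f (fun x hx => ?_) hf.involutive.injective.injOn
    simp only [A, coe_filter, mem_filter] at hx ⊢
    refine ⟨hf.mem hx.1.1, ?_⟩
    rw [hf.involutive x]
    exact lt_of_le_of_ne (not_lt.mp hx.1.2) (hkey.ne hx.2).symm
  have hfixed : #{x ∈ A | f x = x} ≤ 1 :=
    (card_le_card (by intro x; simp +contextual [A])).trans hf.card_fixed_le_one
  have := card_filter_add_card_filter_not (s := A) (fun x => f x = x)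
  omega

theorem conj_swap (hf : IsPairing U f) {a b : V} (ha : a ∈ U) (hb : b ∈ U) :
    IsPairing U (Equiv.swap a b ∘ f ∘ Equiv.swap a b) := by
  set σ := Equiv.swap a b
  have hσU : ∀ {z}, z ∈ U → σ z ∈ U := fun hz => by
    simp only [σ, Equiv.swap_apply_def]; split_ifs <;> assumption
  refine ⟨fun z => ?_, fun z hz => ?_, ?_⟩
  · simp [σ, hf.involutive _]
  · have hσz : σ z = z := Equiv.swap_apply_of_ne_of_ne (ne_of_mem_of_not_mem ha hz).symm
      (ne_of_mem_of_not_mem hb hz).symm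
    simp [hσz, hf.eq_self_of_notMem z hz]
  · refine (card_le_card_of_injOn σ (fun z hz => ?_) σ.injective.injOn).trans
      hf.card_fixed_le_one
    simp only [coe_filter, Function.comp_apply] at hz ⊢
    refine ⟨hσU hz.1, ?_⟩
    rw [← σ.injective.eq_iff, Equiv.swap_apply_self]
    exact hz.2

theorem exists_uncross (hf : IsPairing U f) (d : V → V → ℝ) {x y : V} (hx : x ∈ U)
    (hy : y ∈ U) (hfx : f x ≠ x) (hfy : f y ≠ y) (hyx : y ≠ x) (hyfx : y ≠ f x) :
    ∃ g, IsPairing U g ∧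
      ∑ z ∈ U, d z (g z) + (d x (f x) + d (f x) x + d y (f y) + d (f y) y) =
        ∑ z ∈ U, d z (f z) + (d x y + d y x + d (f x) (f y) + d (f y) (f x)) := by
  have hinv := hf.involutive
  have hfyx : f y ≠ x := fun h => hyfx (by rw [← h, hinv])
  have hfyfx : f y ≠ f x := hinv.injective.ne hyx
  set σ := Equiv.swap (f x) y
  set g := σ ∘ f ∘ σ
  have hσx : σ x = x := Equiv.swap_apply_of_ne_of_ne hfx.symm hyx.symm
  have hσfy : σ (f y) = f y := Equiv.swap_apply_of_ne_of_ne hfyfx hfy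
  have hgx : g x = y := by simp [g, hσx, σ]
  have hgy : g y = x := by simp [g, σ, hinv x, hσx]
  have hgfx : g (f x) = f y := by simp [g, σ, hσfy]
  have hgfy : g (f y) = f x := by simp [g, hσfy, hinv y, σ]
  set A : Finset V := {x, f x, y, f y}
  have hgA : ∀ z ∉ A, g z = f z := fun z hz => by
    simp only [A, mem_insert, mem_singleton, not_or] at hz
    obtain ⟨hzx, hzfx, hzy, hzfy⟩ := hz
    have hfzfx : f z ≠ f x := hinv.injective.ne hzx
    have hfzy : f z ≠ y := fun h => hzfy (by rw [← h, hinv])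
    simp [g, σ, Equiv.swap_apply_of_ne_of_ne hzfx hzy, Equiv.swap_apply_of_ne_of_ne hfzfx hfzy]
  have hAU : A ⊆ U := by simp [A, insert_subset_iff, hx, hy, hf.mem hx, hf.mem hy]
  refine ⟨g, hf.conj_swap (hf.mem hx) hy, ?_⟩
  rw [← sum_sdiff hAU (f := fun z => d z (g z)), ← sum_sdiff hAU (f := fun z => d z (f z)),
    sum_congr rfl fun z hz => by rw [hgA z (mem_sdiff.1 hz).2]]
  simp only [A]
  have hx' : x ∉ ({f x, y, f y} : Finset V) := by simp [hfx.symm, hyx.symm, hfyx.symm]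
  have hfx' : f x ∉ ({y, f y} : Finset V) := by simp [hyfx.symm, hfyfx.symm]
  have hy' : y ∉ ({f y} : Finset V) := by simp [hfy.symm]
  simp only [sum_insert hx', sum_insert hfx', sum_insert hy', sum_singleton, hgx, hgy, hgfx,
    hgfy, hinv x, hinv y]
  ring

end IsPairing

theorem exists_isPairing (U : Finset V) : ∃ f, IsPairing U f := by
  induction U using Finset.strongInduction with
  | H U ih =>
  by_cases hU : #U ≤ 1
  · exact ⟨id, ⟨fun _ => rfl, fun _ _ => rfl, (card_filter_le _ _).trans hU⟩⟩
  obtain ⟨a, ha, b, hb, hab⟩ := one_lt_card.mp (not_le.mp hU)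
  obtain ⟨g, hg⟩ := ih ((U.erase a).erase b)
    ((erase_subset _ _).trans_ssubset (erase_ssubset ha))
  have hga : g a = a := hg.eq_self_of_notMem a (by simp [hab])
  have hgb : g b = b := hg.eq_self_of_notMem b (by simp)
  have hg_ne {x : V} (hxa : x ≠ a) (hxb : x ≠ b) : g x ≠ a ∧ g x ≠ b :=
    ⟨fun h => hxa (by rw [← hg.involutive x, h, hga]),
      fun h => hxb (by rw [← hg.involutive x, h, hgb])⟩
  refine ⟨Equiv.swap a b ∘ g, ⟨fun x => ?_, fun x hx => ?_, ?_⟩⟩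
  · by_cases hxa : x = a
    · simp [hxa, hga, hgb]
    by_cases hxb : x = b
    · simp [hxb, hga, hgb]
    simp [Equiv.swap_apply_of_ne_of_ne (hg_ne hxa hxb).1 (hg_ne hxa hxb).2, hg.involutive x,
      Equiv.swap_apply_of_ne_of_ne hxa hxb]
  · have hxa : x ≠ a := ne_of_mem_of_not_mem ha hx |>.symm
    have hxb : x ≠ b := ne_of_mem_of_not_mem hb hx |>.symm
    simp [hg.eq_self_of_notMem x (by simp [hx]), Equiv.swap_apply_of_ne_of_ne hxa hxb]
  · refine (card_le_card fun x => ?_).trans hg.card_fixed_le_one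
    simp only [mem_filter, mem_erase, Function.comp_apply]
    rintro ⟨hxU, hfix⟩
    by_cases hxa : x = a
    · simp [hxa, hga, hab.symm] at hfix
    by_cases hxb : x = b
    · simp [hxb, hgb, hab] at hfix
    rw [Equiv.swap_apply_of_ne_of_ne (hg_ne hxa hxb).1 (hg_ne hxa hxb).2] at hfix
    exact ⟨⟨hxb, hxa, hxU⟩, hfix⟩

theorem exists_isPairing_forall_add_le [Finite V] (d : V → V → ℝ) (hd : ∀ a b, d a b = d b a)
    (U : Finset V) :
    ∃ f, IsPairing U f ∧ ∀ x ∈ U, ∀ y ∈ U, f x ≠ x → f y ≠ y → y ≠ x → y ≠ f x →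
      d x (f x) + d y (f y) ≤ d x y + d (f x) (f y) := by
  obtain ⟨f, hf, hmin⟩ := Set.exists_min_image {f | IsPairing U f}
    (fun f => ∑ z ∈ U, d z (f z)) (Set.toFinite _) (exists_isPairing U)
  refine ⟨f, hf, fun x hx y hy hfx hfy hyx hyfx => ?_⟩
  obtain ⟨g, hg, hcost⟩ := hf.exists_uncross d hx hy hfx hfy hyx hyfx
  have := hmin g hg
  rw [hd (f x) x, hd (f y) y, hd y x, hd (f y) (f x)] at hcost
  linarith

end Pairing

theorem sum_sum_le_of_pos_disjoint {ι α : Type*} [DecidableEq α] {L : Finset ι}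
    {E : ι → Finset α} {S : Finset α} {w : α → ℝ} (hw : ∀ e ∈ S, 0 ≤ w e)
    (hES : ∀ i ∈ L, E i ⊆ S)
    (hdisj : ∀ e, 0 < w e → ∀ i ∈ L, ∀ j ∈ L, e ∈ E i → e ∈ E j → i = j) :
    ∑ i ∈ L, ∑ e ∈ E i, w e ≤ ∑ e ∈ S, w e := by
  have hpos : ∀ i ∈ L, ∑ e ∈ E i with 0 < w e, w e = ∑ e ∈ E i, w e := fun i hi =>
    sum_filter_of_ne fun e he hne => (hw e (hES i hi he)).lt_of_ne hne.symm
  have hpd : (L : Set ι).PairwiseDisjoint fun i => {e ∈ E i | 0 < w e} :=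
    fun i hi j hj hij => disjoint_left.2 fun e hei hej => hij <|
      hdisj e (mem_filter.1 hei).2 i hi j hj (mem_filter.1 hei).1 (mem_filter.1 hej).1
  rw [← sum_congr rfl hpos, ← sum_biUnion hpd]
  refine sum_le_sum_of_subset_of_nonneg ?_ fun e he _ => hw e he
  exact biUnion_subset.2 fun i hi => (filter_subset _ _).trans (hES i hi)

theorem clog_two_add_one_le {k m : ℕ} (hm : 2 ≤ m) (hk : 2 * k ≤ m + 1) :
    Nat.clog 2 k + 1 ≤ Nat.clog 2 m := by
  rw [Nat.clog_of_two_le one_lt_two hm]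
  exact Nat.add_le_add_right (Nat.clog_mono_right 2 (by omega)) 1

theorem exists_iterate_eq_of_lt {V K : Type*} [Preorder K] [WellFoundedLT K] {key : V → K}
    {parent : V → V} {s : V} (h : ∀ v, v ≠ s → key (parent v) < key v) (v : V) :
    ∃ k, parent^[k] v = s := by
  induction v using (InvImage.wf key wellFounded_lt).induction with
  | _ v ih =>
  by_cases hv : v = s
  · exact ⟨0, hv⟩
  obtain ⟨k, hk⟩ := ih (parent v) (h v hv)
  exact ⟨k + 1, by rwa [Function.iterate_succ_apply]⟩

section TreeDist

variable {V : Type*} {T : SimpleGraph V} (hT : T.IsTree) (w : Sym2 V → ℝ)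

theorem treePath_isPath (u v : V) : (treePath hT u v).IsPath :=
  (hT.existsUnique_path u v).exists.choose_spec

theorem treePath_eq {u v : V} {p : T.Walk u v} (hp : p.IsPath) : treePath hT u v = p :=
  (hT.existsUnique_path u v).unique (treePath_isPath hT u v) hp

theorem treeDist_eq {u v : V} {p : T.Walk u v} (hp : p.IsPath) :
    treeDist hT w u v = (p.edges.map w).sum := by
  rw [treeDist, treePath_eq hT hp]

theorem treePath_reverse (u v : V) : (treePath hT u v).reverse = treePath hT v u :=
  (treePath_eq hT (treePath_isPath hT u v).reverse).symm

theorem treeDist_comm (u v : V) : treeDist hT w u v = treeDist hT w v u := by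
  rw [treeDist, ← treePath_reverse, Walk.edges_reverse, List.map_reverse, List.sum_reverse,
    treeDist]

theorem treeDist_eq_sum_toFinset [DecidableEq V] (u v : V) :
    treeDist hT w u v = ∑ e ∈ (treePath hT u v).edges.toFinset, w e :=
  (List.sum_toFinset w (treePath_isPath hT u v).edges_nodup).symm

variable {w}

theorem treeDist_le_of_walk [DecidableEq V] (hw : ∀ e ∈ T.edgeSet, 0 ≤ w e) {u v : V}
    (p : T.Walk u v) : treeDist hT w u v ≤ (p.edges.map w).sum := by
  rw [treeDist_eq hT w p.bypass_isPath]
  refine (p.edges_bypass_sublist_edges.map w).sum_le_sum fun a ha => ?_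
  obtain ⟨e, he, rfl⟩ := List.mem_map.mp ha
  exact hw e (p.edges_subset_edgeSet he)

theorem treeDist_triangle (hw : ∀ e ∈ T.edgeSet, 0 ≤ w e) (u x v : V) :
    treeDist hT w u v ≤ treeDist hT w u x + treeDist hT w x v := by
  classical
  simpa [Walk.edges_append, treeDist] using
    treeDist_le_of_walk hT hw ((treePath hT u x).append (treePath hT x v))

variable (w)

theorem treeDist_eq_add_of_mem_darts {u v : V} {d : T.Dart} (hd : d ∈ (treePath hT u v).darts) :
    treeDist hT w u v = treeDist hT w u d.fst + w d.edge + treeDist hT w d.snd v := by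
  obtain ⟨p, q, hpq⟩ := (Walk.isSubwalk_toWalk_adj_iff_mem_darts _).mpr hd
  have hpath := treePath_isPath hT u v
  rw [hpq] at hpath
  rw [treeDist, hpq, treeDist_eq hT w hpath.of_append_left.of_append_left,
    treeDist_eq hT w hpath.of_append_right]
  simp [Walk.edges_append, Adj.toWalk, Dart.edge]
  ring

variable {w}

theorem treeDist_add_add_le_of_mem_darts (hw : ∀ e ∈ T.edgeSet, 0 ≤ w e) {a b c e : V}
    {d : T.Dart} (hab : d ∈ (treePath hT a b).darts) (hce : d ∈ (treePath hT c e).darts) :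
    treeDist hT w a c + treeDist hT w b e + 2 * w d.edge ≤
      treeDist hT w a b + treeDist hT w c e := by
  rw [treeDist_eq_add_of_mem_darts hT w hab, treeDist_eq_add_of_mem_darts hT w hce]
  have hac := treeDist_triangle hT hw a d.fst c
  have hbe := treeDist_triangle hT hw b d.snd e
  rw [treeDist_comm hT w d.fst c] at hac
  rw [treeDist_comm hT w b d.snd] at hbe
  linarith

theorem treeDist_uncross (hw : ∀ e ∈ T.edgeSet, 0 ≤ w e) {a b c e : V} {ε : Sym2 V}
    (hε : 0 < w ε) (hab : ε ∈ (treePath hT a b).edges) (hce : ε ∈ (treePath hT c e).edges) :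
    treeDist hT w a c + treeDist hT w b e < treeDist hT w a b + treeDist hT w c e ∨
      treeDist hT w a e + treeDist hT w b c < treeDist hT w a b + treeDist hT w c e := by
  obtain ⟨d, hd, rfl⟩ := List.mem_map.mp hab
  obtain ⟨d', hd', hdd'⟩ := List.mem_map.mp hce
  rcases (dart_edge_eq_iff d' d).mp hdd' with rfl | rfl
  · have := treeDist_add_add_le_of_mem_darts hT hw hd hd'
    left; linarith
  · rw [← Walk.mem_darts_reverse, treePath_reverse] at hd'
    have := treeDist_add_add_le_of_mem_darts hT hw hd hd'
    rw [treeDist_comm hT w e c] at this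
    right; linarith

end TreeDist

section Halving

variable {V : Type*} [Fintype V] [DecidableEq V] {T : SimpleGraph V} [DecidableRel T.Adj]
  (hT : T.IsTree) {w : Sym2 V → ℝ} (hw : ∀ e ∈ T.edgeSet, 0 ≤ w e)
include hw

theorem exists_halving {K : Type*} [LinearOrder K] {key : V → K}
    (hkey : Function.Injective key) (U : Finset V) :
    ∃ (L : Finset V) (f : V → V), L ⊆ U ∧ #(U \ L) ≤ #L + 1 ∧
      (∀ x ∈ L, f x ∈ U ∧ key (f x) < key x) ∧
      ∑ x ∈ L, treeDist hT w x (f x) ≤ ∑ e ∈ T.edgeFinset, w e := by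
  obtain ⟨f, hf, hopt⟩ := exists_isPairing_forall_add_le (treeDist hT w) (treeDist_comm hT w) U
  have hinv := hf.involutive
  refine ⟨{x ∈ U | key (f x) < key x}, f, filter_subset _ _, ?_, fun x hx => ?_, ?_⟩
  · rw [← filter_not]
    exact hf.card_filter_not_lt_le hkey
  · rw [mem_filter] at hx
    exact ⟨hf.mem hx.1, hx.2⟩
  simp_rw [treeDist_eq_sum_toFinset hT w]
  refine sum_sum_le_of_pos_disjoint (fun e he => hw e (mem_edgeFinset.1 he))
    (fun x _ e he => mem_edgeFinset.2 (Walk.edges_subset_edgeSet _ (List.mem_toFinset.1 he))) ?_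
  intro ε hε x hx y hy hεx hεy
  by_contra hyx
  rw [mem_filter] at hx hy
  rw [List.mem_toFinset] at hεx hεy
  have hfx : f x ≠ x := fun h => (h ▸ hx.2).false
  have hfy : f y ≠ y := fun h => (h ▸ hy.2).false
  have hyfx : y ≠ f x := by
    rintro rfl
    rw [hinv x] at hy
    exact lt_asymm hx.2 hy.2
  have h₁ := hopt x hx.1 y hy.1 hfx hfy (Ne.symm hyx) hyfx
  have h₂ := hopt x hx.1 (f y) (hf.mem hy.1) hfx (by rw [hinv]; exact hfy.symm)
    (fun h => hyfx (by rw [← h, hinv])) (hinv.injective.ne (Ne.symm hyx))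
  rw [hinv y, treeDist_comm hT w (f y) y] at h₂
  rcases treeDist_uncross hT hw hε hεx hεy with h | h <;> linarith

theorem exists_parent_sum_treeDist_le {K : Type*} [LinearOrder K] {key : V → K}
    (hkey : Function.Injective key) {s : V} (hs : ∀ v, v ≠ s → key s < key v) (U : Finset V)
    (hsU : s ∈ U) :
    ∃ parent : V → V, (∀ v ∈ U.erase s, parent v ∈ U ∧ key (parent v) < key v) ∧
      ∑ v ∈ U.erase s, treeDist hT w v (parent v) ≤
        Nat.clog 2 #U * ∑ e ∈ T.edgeFinset, w e := by
  induction U using Finset.strongInduction with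
  | H U ih =>
  have hc : 0 ≤ ∑ e ∈ T.edgeFinset, w e := sum_nonneg fun e he => hw e (mem_edgeFinset.1 he)
  by_cases hU : #U ≤ 1
  · have hUs : U.erase s = ∅ := card_eq_zero.1 (by rw [card_erase_of_mem hsU]; omega)
    exact ⟨id, by simp [hUs], by simp only [hUs, sum_empty]; positivity⟩
  obtain ⟨L, f, hLU, hcard, hf, hcost⟩ := exists_halving hT hw hkey U
  have hsL : s ∉ L := fun hs' => by
    obtain ⟨-, hlt⟩ := hf s hs'
    exact (hs (f s) fun h => (h ▸ hlt).false).not_gt hlt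
  have hUL := card_sdiff_add_card_eq_card hLU
  obtain ⟨p, hp, hpcost⟩ := ih (U \ L) (sdiff_ssubset hLU (card_pos.1 (by omega)))
    (mem_sdiff.2 ⟨hsU, hsL⟩)
  refine ⟨fun v => if v ∈ L then f v else p v, fun v hv => ?_, ?_⟩
  · by_cases hvL : v ∈ L
    · simpa [hvL] using hf v hvL
    obtain ⟨hpv, hlt⟩ := hp v (by rw [← erase_sdiff_comm]; exact mem_sdiff.2 ⟨hv, hvL⟩)
    simpa [hvL, hlt] using (mem_sdiff.1 hpv).1
  have hLU' : L ⊆ U.erase s := fun x hx => mem_erase.2 ⟨ne_of_mem_of_not_mem hx hsL, hLU hx⟩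
  have hlog : (Nat.clog 2 #(U \ L) : ℝ) + 1 ≤ Nat.clog 2 #U := by
    exact_mod_cast clog_two_add_one_le (by omega) (by omega)
  calc _ = ∑ v ∈ (U \ L).erase s, treeDist hT w v (p v) + ∑ v ∈ L, treeDist hT w v (f v) := by
        rw [← sum_sdiff hLU', erase_sdiff_comm]
        congr 1 <;> refine sum_congr rfl fun v hv => ?_
        · simp [(mem_sdiff.1 (mem_of_mem_erase hv)).2]
        · simp [hv]
    _ ≤ (Nat.clog 2 #(U \ L) : ℝ) * ∑ e ∈ T.edgeFinset, w e + ∑ e ∈ T.edgeFinset, w e :=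
        add_le_add hpcost hcost
    _ = ((Nat.clog 2 #(U \ L) : ℝ) + 1) * ∑ e ∈ T.edgeFinset, w e := by ring
    _ ≤ _ := mul_le_mul_of_nonneg_right hlog hc

end Halving

/-- Non-decreasing spanning arborescence of logarithmic cost: in a weighted tree `T`
with turnover times `τ` minimized strictly at the depot `s`, there is a parent
function whose arcs form a spanning arborescence rooted at `s`, with non-decreasing
turnover times along arcs, of total (tree-metric) cost at most `⌈log₂ n⌉ · c(T)`. -/
theorem nondecreasing_arborescence {V : Type*} [Fintype V] [DecidableEq V]
    {T : SimpleGraph V} [DecidableRel T.Adj] (hT : T.IsTree) (w : Sym2 V → ℝ)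
    (hw : ∀ e ∈ T.edgeSet, 0 ≤ w e) (τ : V → ℕ) (s : V)
    (hs : ∀ v : V, v ≠ s → τ s < τ v) :
    ∃ parent : V → V,
      (∀ v : V, v ≠ s → τ (parent v) ≤ τ v) ∧
      (∀ v : V, ∃ k : ℕ, parent^[k] v = s) ∧
      (∑ v ∈ Finset.univ.erase s, treeDist hT w v (parent v)) ≤
        (Nat.clog 2 (Fintype.card V) : ℝ) * ∑ e ∈ T.edgeFinset, w e := by
  let key (v : V) : ℕ ×ₗ ℕ := toLex (τ v, Fintype.equivFin V v)
  have hkey : Function.Injective key := fun a b h =>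
    (Fintype.equivFin V).injective (Fin.val_injective (Prod.ext_iff.1 (toLex.injective h)).2)
  obtain ⟨parent, hparent, hcost⟩ := exists_parent_sum_treeDist_le hT hw hkey
    (fun v hv => Prod.Lex.toLex_lt_toLex.2 (Or.inl (hs v hv))) univ (mem_univ s)
  have hlt : ∀ v, v ≠ s → key (parent v) < key v := fun v hv =>
    (hparent v (mem_erase.2 ⟨hv, mem_univ v⟩)).2
  refine ⟨parent, fun v hv => ?_, exists_iterate_eq_of_lt hlt, by simpa using hcost⟩
  rcases Prod.Lex.toLex_lt_toLex.1 (hlt v hv) with h | h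
  exacts [h.le, h.1.le]
end
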